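/- Let A be a finite-dimensional C*-algebra equipped with a faithful positive linear functional φ, and endow A with the inner product ⟨x,y⟩ = φ(x*y), making A a finite-dimensional Hilbert space. Then the multiplication map m: A ⊗ A → A and the unit u: ℂ → A satisfy the Frobenius law: (m ⊗ id) ∘ (id ⊗ m†) = m† ∘ m = (id ⊗ m) ∘ (m† ⊗ id), where daggers denote Hermitian adjoints with respect to this inner product. -/

import Mathlib

open scoped TensorProduct

/-!
Faithfulness of `φ` makes `c ↦ φ (c * -)` injective, hence (in finite dimension) an isomorphism
`A ≃ Dual A`; with `Dual A ⊗ Dual A ≃ Dual (A ⊗ A)` the functionals `⟪c ⊗ d, -⟫` therefore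
separate the points of `A ⊗ A`, and both laws can be tested against them.
Left multiplication by `a` has adjoint left multiplication by `a*`, so
`⟪c ⊗ d, (m ⊗ id)(a ⊗ m† b)⟫ = ⟪a* c ⊗ d, m† b⟫ = φ(d* c* a b) = ⟪c ⊗ d, m† (a b)⟫`.
Right multiplication by `b` also has an adjoint `d ↦ e`, although not `d ↦ d b*` since `φ` need
not be tracial, and `⟪c ⊗ d, (id ⊗ m)(m† a ⊗ b)⟫ = ⟪c ⊗ e, m† a⟫ = φ(e* c* a) = φ(d* c* a b)`.
-/

/-- The "bra" pairing `⟪c ⊗ d, -⟫` on the algebraic tensor square of a `*`-algebra `A`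
equipped with a linear functional `φ`, where the inner product on `A` is `⟪x, y⟫ = φ(x* y)`.
On a pure tensor `x ⊗ y` it gives `φ(c* x) · φ(d* y)`. -/
noncomputable def braket {A : Type*} [Ring A] [Algebra ℂ A] [StarRing A]
    (φ : A →ₗ[ℂ] ℂ) (c d : A) : A ⊗[ℂ] A →ₗ[ℂ] ℂ :=
  TensorProduct.lift <| (LinearMap.mul ℂ ℂ).compl₁₂
    (φ ∘ₗ LinearMap.mulLeft ℂ (star c)) (φ ∘ₗ LinearMap.mulLeft ℂ (star d))

/-- `δ : A → A ⊗ A` is the Hermitian adjoint `m†` of the multiplication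
`m = LinearMap.mul' ℂ A : A ⊗ A → A` with respect to the inner product `⟪x, y⟫ = φ(x* y)`:
`⟪c ⊗ d, δ a⟫ = ⟪m (c ⊗ d), a⟫ = φ((c·d)* · a)` for all `a, c, d`. -/
def IsComulAdjoint {A : Type*} [Ring A] [Algebra ℂ A] [StarRing A]
    (φ : A →ₗ[ℂ] ℂ) (δ : A →ₗ[ℂ] A ⊗[ℂ] A) : Prop :=
  ∀ a c d : A, braket φ c d (δ a) = φ (star (c * d) * a)

section

variable {A : Type*} [Ring A] [Algebra ℂ A] (φ : A →ₗ[ℂ] ℂ)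

noncomputable def mulDual : A →ₗ[ℂ] Module.Dual ℂ A :=
  (LinearMap.mul ℂ A).compr₂ φ

@[simp]
lemma mulDual_apply (c x : A) : mulDual φ c x = φ (c * x) := rfl

variable [StarRing A]

@[simp]
lemma braket_tmul (c d x y : A) :
    braket φ c d (x ⊗ₜ[ℂ] y) = φ (star c * x) * φ (star d * y) := by
  simp [braket]

variable {φ}

lemma mulDual_injective (hfaith : ∀ x : A, x ≠ 0 → φ (star x * x) ≠ 0) :
    Function.Injective (mulDual φ) := by
  refine (injective_iff_map_eq_zero _).mpr fun c hc => ?_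
  by_contra hc0
  apply hfaith (star c) (star_ne_zero.mpr hc0)
  simpa using LinearMap.congr_fun hc (star c)

lemma mulDual_surjective [FiniteDimensional ℂ A]
    (hfaith : ∀ x : A, x ≠ 0 → φ (star x * x) ≠ 0) :
    Function.Surjective (mulDual φ) :=
  (LinearMap.injective_iff_surjective_of_finrank_eq_finrank Subspace.dual_finrank_eq.symm).mp
    (mulDual_injective hfaith)

lemma braket_eq_dualDistrib (c d : A) :
    braket φ c d = TensorProduct.dualDistrib ℂ A A (mulDual φ (star c) ⊗ₜ mulDual φ (star d)) :=
  TensorProduct.ext' fun x y => by simp [TensorProduct.dualDistrib_apply]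

lemma ext_braket [FiniteDimensional ℂ A] (hfaith : ∀ x : A, x ≠ 0 → φ (star x * x) ≠ 0)
    {t t' : A ⊗[ℂ] A} (h : ∀ c d : A, braket φ c d t = braket φ c d t') : t = t' := by
  rw [← sub_eq_zero, ← Module.forall_dual_apply_eq_zero_iff ℂ]
  intro g
  obtain ⟨s, rfl⟩ := (TensorProduct.dualDistribEquiv ℂ A A).surjective g
  induction s using TensorProduct.induction_on with
  | zero => simp
  | add s s' hs hs' => simp only [map_add, LinearMap.add_apply, hs, hs', add_zero]
  | tmul f g =>
    obtain ⟨a, rfl⟩ := mulDual_surjective hfaith f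
    obtain ⟨b, rfl⟩ := mulDual_surjective hfaith g
    have hab := h (star a) (star b)
    simp only [braket_eq_dualDistrib, star_star] at hab
    change TensorProduct.dualDistrib ℂ A A _ (t - t') = 0
    rw [map_sub, hab, sub_self]

lemma exists_star_mul_eq_star_mul_mul [FiniteDimensional ℂ A]
    (hfaith : ∀ x : A, x ≠ 0 → φ (star x * x) ≠ 0) (b d : A) :
    ∃ e : A, ∀ x, φ (star e * x) = φ (star d * x * b) := by
  obtain ⟨e, he⟩ := mulDual_surjective hfaith
    (φ ∘ₗ LinearMap.mulRight ℂ b ∘ₗ LinearMap.mulLeft ℂ (star d))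
  exact ⟨star e, fun x => by simpa using LinearMap.congr_fun he x⟩

lemma braket_mul'_map_assoc_symm (a c d : A) (t : A ⊗[ℂ] A) :
    braket φ c d (TensorProduct.map (LinearMap.mul' ℂ A) LinearMap.id
      ((TensorProduct.assoc ℂ A A A).symm (a ⊗ₜ t))) = braket φ (star a * c) d t := by
  induction t using TensorProduct.induction_on with
  | zero => simp
  | add s s' hs hs' => simp only [TensorProduct.tmul_add, map_add, hs, hs']
  | tmul x y => simp [star_mul, mul_assoc]

lemma braket_map_mul'_assoc {b d e : A} (he : ∀ x, φ (star e * x) = φ (star d * x * b))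
    (c : A) (t : A ⊗[ℂ] A) :
    braket φ c d (TensorProduct.map LinearMap.id (LinearMap.mul' ℂ A)
      (TensorProduct.assoc ℂ A A A (t ⊗ₜ b))) = braket φ c e t := by
  induction t using TensorProduct.induction_on with
  | zero => simp
  | add s s' hs hs' => simp only [TensorProduct.add_tmul, map_add, hs, hs']
  | tmul x y => simp [he, mul_assoc]

end

theorem frobenius_law_of_cstar_functional_general
    {A : Type*} [NormedRing A] [StarRing A]
    [NormedAlgebra ℂ A] [FiniteDimensional ℂ A]
    (φ : A →ₗ[ℂ] ℂ)
    (hfaith : ∀ x : A, x ≠ 0 → φ (star x * x) ≠ 0)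
    (δ : A →ₗ[ℂ] A ⊗[ℂ] A) (hδ : IsComulAdjoint φ δ) :
    (TensorProduct.map (LinearMap.mul' ℂ A) LinearMap.id) ∘ₗ
        (TensorProduct.assoc ℂ A A A).symm.toLinearMap ∘ₗ
        (TensorProduct.map LinearMap.id δ) = δ ∘ₗ LinearMap.mul' ℂ A ∧
    (TensorProduct.map LinearMap.id (LinearMap.mul' ℂ A)) ∘ₗ
        (TensorProduct.assoc ℂ A A A).toLinearMap ∘ₗ
        (TensorProduct.map δ LinearMap.id) = δ ∘ₗ LinearMap.mul' ℂ A := by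
  constructor
  · refine TensorProduct.ext' fun a b => ext_braket hfaith fun c d => ?_
    simp only [LinearMap.comp_apply, TensorProduct.map_tmul, LinearMap.id_apply,
      LinearEquiv.coe_coe, LinearMap.mul'_apply, braket_mul'_map_assoc_symm]
    rw [hδ, hδ]
    simp only [star_mul, star_star, mul_assoc]
  · refine TensorProduct.ext' fun a b => ext_braket hfaith fun c d => ?_
    obtain ⟨e, he⟩ := exists_star_mul_eq_star_mul_mul hfaith b d
    simp only [LinearMap.comp_apply, TensorProduct.map_tmul, LinearMap.id_apply,
      LinearEquiv.coe_coe, LinearMap.mul'_apply, braket_map_mul'_assoc he]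
    rw [hδ, hδ]
    simp only [star_mul, mul_assoc, he]

/-- Let `A` be a finite-dimensional C*-algebra with a faithful positive
linear functional `φ`, viewed as a Hilbert space via `⟪x,y⟫ = φ(x* y)`.  Then the
multiplication `m : A ⊗ A → A` and its Hermitian adjoint `m† = δ` satisfy the Frobenius law
`(m ⊗ id) ∘ (id ⊗ m†) = m† ∘ m = (id ⊗ m) ∘ (m† ⊗ id)` (with the evident associators). -/
theorem frobenius_law_of_cstar_functional
    {A : Type*} [NormedRing A] [StarRing A] [CStarRing A]
    [NormedAlgebra ℂ A] [StarModule ℂ A] [FiniteDimensional ℂ A]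
    (φ : A →ₗ[ℂ] ℂ)
    (hpos : ∀ x : A, 0 ≤ (φ (star x * x)).re ∧ (φ (star x * x)).im = 0)
    (hfaith : ∀ x : A, x ≠ 0 → φ (star x * x) ≠ 0)
    (δ : A →ₗ[ℂ] A ⊗[ℂ] A) (hδ : IsComulAdjoint φ δ) :
    (TensorProduct.map (LinearMap.mul' ℂ A) LinearMap.id) ∘ₗ
        (TensorProduct.assoc ℂ A A A).symm.toLinearMap ∘ₗ
        (TensorProduct.map LinearMap.id δ) = δ ∘ₗ LinearMap.mul' ℂ A ∧
    (TensorProduct.map LinearMap.id (LinearMap.mul' ℂ A)) ∘ₗ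
        (TensorProduct.assoc ℂ A A A).toLinearMap ∘ₗ
        (TensorProduct.map δ LinearMap.id) = δ ∘ₗ LinearMap.mul' ℂ A :=
  frobenius_law_of_cstar_functional_general φ hfaith δ hδ
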